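/- Let α ∈ ℂ and let j, k ≥ 1 be integers with j + k even (i.e. j and k have the same parity). Then B_j·A_k + B_k·A_j = λ_{j,k}·I, where λ_{j,k} := (−1)^{j−1}(4α² + 4jk − 1)(4α² − (2j−1)(2k−1))/(8jk) and I is the 2×2 identity matrix. -/
import Mathlib

set_option maxHeartbeats 1000000

/-- The matrix `A_k` from the jump coefficients. -/
noncomputable def Amat (α : ℂ) (k : ℕ) : Matrix (Fin 2) (Fin 2) ℂ :=
  !![(-1) ^ k * (α ^ 2 + (k : ℂ) / 2 - 1 / 4) / (k : ℂ), -Complex.I * ((k : ℂ) - 1 / 2);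
     (-1) ^ k * ((k : ℂ) - 1 / 2) * Complex.I, (α ^ 2 + (k : ℂ) / 2 - 1 / 4) / (k : ℂ)]

/-- `B_k = A_k` for odd `k`, and `B_k = A_k - ((4α²+2k-1)/(2k)) I` for even `k`. -/
noncomputable def Bmat (α : ℂ) (k : ℕ) : Matrix (Fin 2) (Fin 2) ℂ :=
  if Odd k then Amat α k
  else Amat α k - ((4 * α ^ 2 + 2 * (k : ℂ) - 1) / (2 * (k : ℂ))) • (1 : Matrix (Fin 2) (Fin 2) ℂ)

/-- `λ_{j,k} = (-1)^{j-1} (4α² + 4jk - 1)(4α² - (2j-1)(2k-1)) / (8jk)`. -/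
noncomputable def lamjk (α : ℂ) (j k : ℕ) : ℂ :=
  (-1) ^ (j - 1) * (4 * α ^ 2 + 4 * (j : ℂ) * (k : ℂ) - 1) *
    (4 * α ^ 2 - (2 * (j : ℂ) - 1) * (2 * (k : ℂ) - 1)) / (8 * (j : ℂ) * (k : ℂ))

/-- if `j + k` is even then `B_j A_k + B_k A_j = λ_{j,k} I`. -/
theorem Bmat_Amat_scalar_even (α : ℂ) (j k : ℕ) (hj : 1 ≤ j) (hk : 1 ≤ k)
    (h : Even (j + k)) :
    Bmat α j * Amat α k + Bmat α k * Amat α j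
      = lamjk α j k • (1 : Matrix (Fin 2) (Fin 2) ℂ) := by
  have hj0 : (j : ℂ) ≠ 0 := Nat.cast_ne_zero.2 (by omega)
  have hk0 : (k : ℂ) ≠ 0 := Nat.cast_ne_zero.2 (by omega)
  have hI : Complex.I ^ 2 = -1 := Complex.I_sq
  have hu : (j:ℂ) * (j:ℂ)⁻¹ = 1 := mul_inv_cancel₀ hj0
  have hv : (k:ℂ) * (k:ℂ)⁻¹ = 1 := mul_inv_cancel₀ hk0
  have hpar : Even j ↔ Even k := Nat.even_add.mp h
  by_cases hjo : Odd j
  · have hko : Odd k := Nat.not_even_iff_odd.mp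
      (fun hke => (Nat.not_even_iff_odd.mpr hjo) (hpar.mpr hke))
    have hpj : ((-1 : ℂ)) ^ j = -1 := Odd.neg_one_pow hjo
    have hpk : ((-1 : ℂ)) ^ k = -1 := Odd.neg_one_pow hko
    have hpj1 : ((-1 : ℂ)) ^ (j - 1) = 1 := Even.neg_one_pow (Nat.Odd.sub_odd hjo odd_one)
    simp only [Bmat, if_pos hjo, if_pos hko, Amat, lamjk, hpj, hpk, hpj1]
    ext i l
    fin_cases i <;> fin_cases l <;>
      simp [Matrix.mul_apply, Fin.sum_univ_two, Matrix.one_apply] <;>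
      first
        | ring1
        | linear_combination
            ((1/2:ℂ)*(k:ℂ)*(k:ℂ)⁻¹ + (-1)*(k:ℂ)^2*(k:ℂ)⁻¹ + (-1)*(j:ℂ)*(k:ℂ)*(k:ℂ)⁻¹
              + (2)*(j:ℂ)*(k:ℂ)^2*(k:ℂ)⁻¹) * hu
            + ((1/2:ℂ) + (-1)*(k:ℂ) + (-1)*(j:ℂ) + (2)*(j:ℂ)*(k:ℂ)) * hv
            + ((1/2:ℂ) + (-1)*(k:ℂ) + (-1)*(j:ℂ) + (2)*(j:ℂ)*(k:ℂ)) * hI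
  · have hje : Even j := Nat.not_odd_iff_even.mp hjo
    have hke : Even k := hpar.mp hje
    have hko : ¬ Odd k := Nat.not_odd_iff_even.mpr hke
    have hpj : ((-1 : ℂ)) ^ j = 1 := Even.neg_one_pow hje
    have hpk : ((-1 : ℂ)) ^ k = 1 := Even.neg_one_pow hke
    have hpj1 : ((-1 : ℂ)) ^ (j - 1) = -1 := Odd.neg_one_pow (Nat.Even.sub_odd hj hje odd_one)
    simp only [Bmat, if_neg hjo, if_neg hko, Amat, lamjk, hpj, hpk, hpj1]
    ext i l
    fin_cases i <;> fin_cases l <;>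
      simp [Matrix.mul_apply, Fin.sum_univ_two, Matrix.one_apply] <;>
      first
        | ring1
        | linear_combination
            ((-1/2:ℂ)*(k:ℂ)*(k:ℂ)⁻¹ + (k:ℂ)^2*(k:ℂ)⁻¹ + (j:ℂ)*(k:ℂ)*(k:ℂ)⁻¹
              + (-2)*(j:ℂ)*(k:ℂ)^2*(k:ℂ)⁻¹) * hu
            + ((-1/2:ℂ) + (k:ℂ) + (j:ℂ) + (-2)*(j:ℂ)*(k:ℂ)) * hv
            + ((-1/2:ℂ) + (k:ℂ) + (j:ℂ) + (-2)*(j:ℂ)*(k:ℂ)) * hI
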